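/- The function W(x) = Σ_{i=1}^3 C_i e^{η_i x} on [0,∞) satisfies ∫₀^∞ e^{−βx} W(x) dx = 1/(Ψ(β) − r) for all β > η₁ = 1, where Ψ(β) = μβ + σ²β²/2 − λβ/(β+ρ), provided η₁ = 1 > η₃ > η₂ are the three real roots of Ψ(θ) = r and C_i = 2(η_i+ρ)/(σ² Π_{j≠i}(η_i−η_j)). -/

import Mathlib

/-!
Clearing the denominator `θ + ρ` turns `Ψ(θ) - r` into a cubic with leading coefficient `σ²/2`;
since `1, η₂, η₃` are three distinct roots of it, `Ψ(β) - r = σ²(β-1)(β-η₂)(β-η₃) / (2(β+ρ))`.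
The Laplace transform of `W` at `β > 1` is `∑ C_i / (β - η_i)`, and the `C_i` are exactly the
partial-fraction coefficients of the reciprocal of this rational function.
-/

open MeasureTheory Real Set

lemma integral_exp_neg_mul_mul_sum_exp_Ioi {ι : Type*} (s : Finset ι) (c η : ι → ℝ) {β : ℝ}
    (hη : ∀ i ∈ s, η i < β) :
    ∫ x in Ioi (0 : ℝ), exp (-β * x) * ∑ i ∈ s, c i * exp (η i * x) =
      ∑ i ∈ s, c i / (β - η i) := by
  have hterm : ∀ x, exp (-β * x) * ∑ i ∈ s, c i * exp (η i * x) =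
      ∑ i ∈ s, c i * exp ((η i - β) * x) := by
    intro x
    rw [Finset.mul_sum]
    refine Finset.sum_congr rfl fun i _ => ?_
    rw [mul_left_comm, ← exp_add]
    ring_nf
  simp_rw [hterm]
  rw [integral_finsetSum s fun i hi =>
    (integrableOn_exp_mul_Ioi (sub_neg.mpr (hη i hi)) 0).const_mul (c i)]
  refine Finset.sum_congr rfl fun i hi => ?_
  rw [integral_const_mul, integral_exp_mul_Ioi (sub_neg.mpr (hη i hi)), mul_zero, exp_zero,
    neg_div, ← div_neg, neg_sub, mul_one_div]

lemma quadratic_coeffs_eq_zero_of_three_roots {a b c x₁ x₂ x₃ : ℝ}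
    (h₁₂ : x₁ ≠ x₂) (h₁₃ : x₁ ≠ x₃) (h₂₃ : x₂ ≠ x₃)
    (e₁ : a * x₁ ^ 2 + b * x₁ + c = 0) (e₂ : a * x₂ ^ 2 + b * x₂ + c = 0)
    (e₃ : a * x₃ ^ 2 + b * x₃ + c = 0) : a = 0 ∧ b = 0 ∧ c = 0 := by
  have f₁ : a * (x₁ + x₂) + b = 0 := by
    refine (mul_eq_zero.mp ?_).resolve_left (sub_ne_zero.mpr h₁₂)
    linear_combination e₁ - e₂
  have f₂ : a * (x₁ + x₃) + b = 0 := by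
    refine (mul_eq_zero.mp ?_).resolve_left (sub_ne_zero.mpr h₁₃)
    linear_combination e₁ - e₃
  have ha : a = 0 := by
    refine (mul_eq_zero.mp ?_).resolve_left (sub_ne_zero.mpr h₂₃)
    linear_combination f₁ - f₂
  have hb : b = 0 := by linear_combination f₁ - (x₁ + x₂) * ha
  exact ⟨ha, hb, by linear_combination e₁ - x₁ ^ 2 * ha - x₁ * hb⟩

lemma cubic_eq_mul_of_three_roots {a b c d x₁ x₂ x₃ : ℝ}
    (h₁₂ : x₁ ≠ x₂) (h₁₃ : x₁ ≠ x₃) (h₂₃ : x₂ ≠ x₃)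
    (e₁ : a * x₁ ^ 3 + b * x₁ ^ 2 + c * x₁ + d = 0)
    (e₂ : a * x₂ ^ 3 + b * x₂ ^ 2 + c * x₂ + d = 0)
    (e₃ : a * x₃ ^ 3 + b * x₃ ^ 2 + c * x₃ + d = 0) (θ : ℝ) :
    a * θ ^ 3 + b * θ ^ 2 + c * θ + d = a * (θ - x₁) * (θ - x₂) * (θ - x₃) := by
  obtain ⟨h₂, h₁, h₀⟩ := quadratic_coeffs_eq_zero_of_three_roots
    (a := b + a * (x₁ + x₂ + x₃)) (b := c - a * (x₁ * x₂ + x₁ * x₃ + x₂ * x₃))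
    (c := d + a * (x₁ * x₂ * x₃)) h₁₂ h₁₃ h₂₃
    (by linear_combination e₁) (by linear_combination e₂) (by linear_combination e₃)
  linear_combination θ ^ 2 * h₂ + θ * h₁ + h₀

lemma partial_fractions_three {σ ρ a b c θ : ℝ} (hσ : σ ≠ 0)
    (hab : a ≠ b) (hac : a ≠ c) (hbc : b ≠ c) (hθa : θ ≠ a) (hθb : θ ≠ b) (hθc : θ ≠ c) :
    2 * (a + ρ) / (σ ^ 2 * (a - b) * (a - c)) / (θ - a) +
        2 * (b + ρ) / (σ ^ 2 * (b - a) * (b - c)) / (θ - b) +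
        2 * (c + ρ) / (σ ^ 2 * (c - a) * (c - b)) / (θ - c) =
      (θ + ρ) / (σ ^ 2 / 2 * (θ - a) * (θ - b) * (θ - c)) := by
  field_simp
  ring

/-- The Laplace exponent `Ψ` of the paper. -/
noncomputable def laplaceExponent (μ σ lam ρ θ : ℝ) : ℝ :=
  μ * θ + σ ^ 2 * θ ^ 2 / 2 - lam * θ / (θ + ρ)

lemma laplaceExponent_sub_mul {μ σ lam ρ θ : ℝ} (r : ℝ) (hθ : θ + ρ ≠ 0) :
    (laplaceExponent μ σ lam ρ θ - r) * (θ + ρ) =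
      σ ^ 2 / 2 * θ ^ 3 + (μ + σ ^ 2 * ρ / 2) * θ ^ 2 + (μ * ρ - r - lam) * θ - r * ρ := by
  unfold laplaceExponent
  field_simp
  ring

lemma laplaceExponent_sub_eq_of_roots {μ σ lam ρ r x₁ x₂ x₃ : ℝ}
    (h₁₂ : x₁ ≠ x₂) (h₁₃ : x₁ ≠ x₃) (h₂₃ : x₂ ≠ x₃)
    (hρ₁ : x₁ + ρ ≠ 0) (hρ₂ : x₂ + ρ ≠ 0) (hρ₃ : x₃ + ρ ≠ 0)
    (e₁ : laplaceExponent μ σ lam ρ x₁ = r) (e₂ : laplaceExponent μ σ lam ρ x₂ = r)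
    (e₃ : laplaceExponent μ σ lam ρ x₃ = r) {θ : ℝ} (hθ : θ + ρ ≠ 0) :
    laplaceExponent μ σ lam ρ θ - r = σ ^ 2 / 2 * (θ - x₁) * (θ - x₂) * (θ - x₃) / (θ + ρ) := by
  have root : ∀ {x}, x + ρ ≠ 0 → laplaceExponent μ σ lam ρ x = r →
      σ ^ 2 / 2 * x ^ 3 + (μ + σ ^ 2 * ρ / 2) * x ^ 2 + (μ * ρ - r - lam) * x - r * ρ = 0 := by
    intro x hx e
    rw [← laplaceExponent_sub_mul r hx, e, sub_self, zero_mul]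
  rw [eq_div_iff hθ, laplaceExponent_sub_mul r hθ, sub_eq_add_neg (b := r * ρ)]
  exact cubic_eq_mul_of_three_roots h₁₂ h₁₃ h₂₃
    (by linear_combination root hρ₁ e₁) (by linear_combination root hρ₂ e₂)
    (by linear_combination root hρ₃ e₃) θ

theorem scale_function_laplace_general (σ lam ρ r μ η₂ η₃ C₁ C₂ C₃ : ℝ)
    (hσ : 0 < σ)
    (Ψ : ℝ → ℝ) (hΨ : ∀ θ, Ψ θ = μ*θ + σ^2*θ^2/2 - lam*θ/(θ+ρ))
    (hroot1 : Ψ 1 = r) (hroot2 : Ψ η₂ = r) (hroot3 : Ψ η₃ = r)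
    (hord1 : η₂ < -ρ) (hord2 : -ρ < η₃) (hord3 : η₃ < 0)
    (hC₁ : C₁ = 2*(1+ρ)/(σ^2*(1-η₂)*(1-η₃)))
    (hC₂ : C₂ = 2*(η₂+ρ)/(σ^2*(η₂-1)*(η₂-η₃)))
    (hC₃ : C₃ = 2*(η₃+ρ)/(σ^2*(η₃-1)*(η₃-η₂)))
    (W : ℝ → ℝ)
    (hW : ∀ x, W x = C₁*Real.exp (1*x) + C₂*Real.exp (η₂*x) + C₃*Real.exp (η₃*x)) :
    ∀ β : ℝ, 1 < β →
      ∫ x in Set.Ioi (0:ℝ), Real.exp (-β*x) * W x = 1/(Ψ β - r) := by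
  intro β hβ
  obtain rfl : Ψ = laplaceExponent μ σ lam ρ := funext hΨ
  have hW_sum : ∀ x, W x = ∑ i, ![C₁, C₂, C₃] i * exp (![1, η₂, η₃] i * x) := by
    simp [hW, Fin.sum_univ_three]
  have hlt : ∀ i ∈ Finset.univ, ![1, η₂, η₃] i < β := by
    intro i _
    fin_cases i <;> simp <;> linarith
  simp_rw [hW_sum]
  rw [integral_exp_neg_mul_mul_sum_exp_Ioi _ _ _ hlt, Fin.sum_univ_three]
  simp only [Fin.isValue, Matrix.cons_val_zero, Matrix.cons_val_one, Matrix.cons_val_two]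
  rw [laplaceExponent_sub_eq_of_roots (by linarith) (by linarith) (by linarith) (by linarith)
    (by linarith) (by linarith) hroot1 hroot2 hroot3 (by linarith), one_div_div, hC₁, hC₂, hC₃]
  exact partial_fractions_three hσ.ne' (by linarith) (by linarith) (by linarith) (by linarith)
    (by linarith) (by linarith)

theorem scale_function_laplace (σ lam ρ r μ η₂ η₃ C₁ C₂ C₃ : ℝ)
    (hσ : 0 < σ) (hlam : 0 < lam) (hρ : 0 < ρ) (hr : 0 < r)
    (hμ : μ = r - σ^2/2 + lam/(1+ρ))
    (Ψ : ℝ → ℝ) (hΨ : ∀ θ, Ψ θ = μ*θ + σ^2*θ^2/2 - lam*θ/(θ+ρ))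
    (hroot1 : Ψ 1 = r) (hroot2 : Ψ η₂ = r) (hroot3 : Ψ η₃ = r)
    (hord1 : η₂ < -ρ) (hord2 : -ρ < η₃) (hord3 : η₃ < 0)
    (hC₁ : C₁ = 2*(1+ρ)/(σ^2*(1-η₂)*(1-η₃)))
    (hC₂ : C₂ = 2*(η₂+ρ)/(σ^2*(η₂-1)*(η₂-η₃)))
    (hC₃ : C₃ = 2*(η₃+ρ)/(σ^2*(η₃-1)*(η₃-η₂)))
    (W : ℝ → ℝ)
    (hW : ∀ x, W x = C₁*Real.exp (1*x) + C₂*Real.exp (η₂*x) + C₃*Real.exp (η₃*x)) :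
    ∀ β : ℝ, 1 < β →
      ∫ x in Set.Ioi (0:ℝ), Real.exp (-β*x) * W x = 1/(Ψ β - r) :=
  scale_function_laplace_general σ lam ρ r μ η₂ η₃ C₁ C₂ C₃ hσ Ψ hΨ hroot1 hroot2 hroot3 hord1 hord2
    hord3 hC₁ hC₂ hC₃ W hW
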